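/- arXiv:2106.00661 — 3 statements merged into one kernel-verified Lean document; each statement's English description precedes it below -/
import Mathlib

section
/- Let K ⊆ ℝ^n and Λ ⊆ ℝ^m be nonempty convex compact sets, and let L : K × Λ → ℝ be continuous, convex in its first argument for every fixed second argument, and concave in its second argument for every fixed first argument. Let d_1,…,d_K ∈ K and λ_1,…,λ_K ∈ Λ be sequences satisfying the average-regret bounds (1/K)(Σ_{k=1}^K L(d_k, λ_k) − min_{d ∈ K} Σ_{k=1}^K L(d, λ_k)) ≤ ε and (1/K)(max_{λ ∈ Λ} Σ_{k=1}^K L(d_k, λ) − Σ_{k=1}^K L(d_k, λ_k)) ≤ δ. Set d̄ = (1/K) Σ_k d_k, λ̄ = (1/K) Σ_k λ_k, and v = min_{d ∈ K} max_{λ ∈ Λ} L(d, λ). Then min_{d ∈ K} L(d, λ̄) ≥ v − ε − δ and max_{λ ∈ Λ} L(d̄, λ) ≤ v + ε + δ. -/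
/-!
The averaged iterates are squeezed between two one-sided values: by Jensen (convexity in the
first argument, concavity in the second), `max_λ L(d̄, λ)` is at most `1/N` times the best
response to the `d_k`, and `min_d L(d, λ̄)` is at least `1/N` times the best response to the
`λ_k`. The two regret bounds tie both best responses to `∑ L(d_k, λ_k)`, giving
`max_λ L(d̄, λ) ≤ min_d L(d, λ̄) + ε + δ`, while weak duality gives
`min_d L(d, λ̄) ≤ v ≤ max_λ L(d̄, λ)`.
-/

open Finset

section Average

variable {ι E : Type*} [Fintype ι] [Nonempty ι] [AddCommGroup E] [Module ℝ E]
  {s : Set E} {p : ι → E}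

lemma Convex.inv_card_smul_sum_mem (hs : Convex ℝ s) (hp : ∀ i, p i ∈ s) :
    (Fintype.card ι : ℝ)⁻¹ • ∑ i, p i ∈ s := by
  rw [smul_sum]
  exact hs.sum_mem (fun _ _ => by positivity) (by simp) (fun i _ => hp i)

lemma ConvexOn.map_inv_card_smul_sum_le {f : E → ℝ} (hf : ConvexOn ℝ s f)
    (hp : ∀ i, p i ∈ s) :
    f ((Fintype.card ι : ℝ)⁻¹ • ∑ i, p i) ≤ (Fintype.card ι : ℝ)⁻¹ * ∑ i, f (p i) := by
  simpa only [smul_sum, mul_sum, smul_eq_mul] using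
    hf.map_sum_le (fun _ _ => by positivity) (by simp) (fun i _ => hp i)

lemma ConcaveOn.inv_card_mul_sum_le_map {f : E → ℝ} (hf : ConcaveOn ℝ s f)
    (hp : ∀ i, p i ∈ s) :
    (Fintype.card ι : ℝ)⁻¹ * ∑ i, f (p i) ≤ f ((Fintype.card ι : ℝ)⁻¹ • ∑ i, p i) := by
  simpa only [smul_sum, mul_sum, smul_eq_mul] using
    hf.le_map_sum (fun _ _ => by positivity) (by simp) (fun i _ => hp i)

end Average

section Minimax

variable {α β : Type*} {L : α → β → ℝ} {K : Set α} {Λ : Set β} {C : ℝ}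

noncomputable def minimaxValue (L : α → β → ℝ) (K : Set α) (Λ : Set β) : ℝ :=
  sInf ((fun x => sSup ((fun l => L x l) '' Λ)) '' K)

lemma bddBelow_image_left (hC : ∀ x ∈ K, ∀ l ∈ Λ, |L x l| ≤ C) {l : β} (hl : l ∈ Λ) :
    BddBelow ((fun x => L x l) '' K) :=
  ⟨-C, by rintro _ ⟨x, hx, rfl⟩; exact neg_le_of_abs_le (hC x hx l hl)⟩

lemma bddAbove_image_right (hC : ∀ x ∈ K, ∀ l ∈ Λ, |L x l| ≤ C) {x : α} (hx : x ∈ K) :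
    BddAbove ((fun l => L x l) '' Λ) :=
  ⟨C, by rintro _ ⟨l, hl, rfl⟩; exact le_of_abs_le (hC x hx l hl)⟩

lemma bddBelow_image_sum_left {ι : Type*} [Fintype ι] (hC : ∀ x ∈ K, ∀ l ∈ Λ, |L x l| ≤ C)
    {lam : ι → β} (hlam : ∀ i, lam i ∈ Λ) : BddBelow ((fun x => ∑ i, L x (lam i)) '' K) :=
  ⟨∑ _i : ι, -C, by
    rintro _ ⟨x, hx, rfl⟩
    exact sum_le_sum fun i _ => neg_le_of_abs_le (hC x hx _ (hlam i))⟩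

lemma bddAbove_image_sum_right {ι : Type*} [Fintype ι] (hC : ∀ x ∈ K, ∀ l ∈ Λ, |L x l| ≤ C)
    {d : ι → α} (hd : ∀ i, d i ∈ K) : BddAbove ((fun l => ∑ i, L (d i) l) '' Λ) :=
  ⟨∑ _i : ι, C, by
    rintro _ ⟨l, hl, rfl⟩
    exact sum_le_sum fun i _ => le_of_abs_le (hC _ (hd i) l hl)⟩

lemma sInf_image_le_minimaxValue (hC : ∀ x ∈ K, ∀ l ∈ Λ, |L x l| ≤ C) (hK : K.Nonempty)
    {l : β} (hl : l ∈ Λ) : sInf ((fun x => L x l) '' K) ≤ minimaxValue L K Λ := by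
  refine le_csInf (hK.image _) ?_
  rintro _ ⟨x, hx, rfl⟩
  calc sInf ((fun x => L x l) '' K) ≤ L x l := csInf_le (bddBelow_image_left hC hl) ⟨x, hx, rfl⟩
    _ ≤ sSup ((fun l => L x l) '' Λ) := le_csSup (bddAbove_image_right hC hx) ⟨l, hl, rfl⟩

lemma minimaxValue_le_sSup_image (hC : ∀ x ∈ K, ∀ l ∈ Λ, |L x l| ≤ C) (hΛ : Λ.Nonempty)
    {x : α} (hx : x ∈ K) : minimaxValue L K Λ ≤ sSup ((fun l => L x l) '' Λ) := by
  obtain ⟨l, hl⟩ := hΛ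
  refine csInf_le ⟨-C, ?_⟩ ⟨x, hx, rfl⟩
  rintro _ ⟨y, hy, rfl⟩
  exact (neg_le_of_abs_le (hC y hy l hl)).trans
    (le_csSup (bddAbove_image_right hC hy) ⟨l, hl, rfl⟩)

end Minimax

section Jensen

variable {ι E F : Type*} [Fintype ι] [Nonempty ι] {L : E → F → ℝ} {K : Set E} {Λ : Set F}
  {C : ℝ}

lemma inv_card_mul_sInf_image_sum_le [AddCommGroup F] [Module ℝ F]
    (hC : ∀ x ∈ K, ∀ l ∈ Λ, |L x l| ≤ C) (hK : K.Nonempty)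
    (hconc : ∀ x ∈ K, ConcaveOn ℝ Λ (L x)) {lam : ι → F} (hlam : ∀ i, lam i ∈ Λ) :
    (Fintype.card ι : ℝ)⁻¹ * sInf ((fun x => ∑ i, L x (lam i)) '' K)
      ≤ sInf ((fun x => L x ((Fintype.card ι : ℝ)⁻¹ • ∑ i, lam i)) '' K) := by
  refine le_csInf (hK.image _) ?_
  rintro _ ⟨x, hx, rfl⟩
  calc (Fintype.card ι : ℝ)⁻¹ * sInf ((fun x => ∑ i, L x (lam i)) '' K)
      ≤ (Fintype.card ι : ℝ)⁻¹ * ∑ i, L x (lam i) := by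
        gcongr
        exact csInf_le (bddBelow_image_sum_left hC hlam) ⟨x, hx, rfl⟩
    _ ≤ L x ((Fintype.card ι : ℝ)⁻¹ • ∑ i, lam i) := (hconc x hx).inv_card_mul_sum_le_map hlam

lemma sSup_image_le_inv_card_mul_sSup_image_sum [AddCommGroup E] [Module ℝ E]
    (hC : ∀ x ∈ K, ∀ l ∈ Λ, |L x l| ≤ C)
    (hΛ : Λ.Nonempty) (hconv : ∀ l ∈ Λ, ConvexOn ℝ K fun x => L x l) {d : ι → E}
    (hd : ∀ i, d i ∈ K) :
    sSup ((fun l => L ((Fintype.card ι : ℝ)⁻¹ • ∑ i, d i) l) '' Λ)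
      ≤ (Fintype.card ι : ℝ)⁻¹ * sSup ((fun l => ∑ i, L (d i) l) '' Λ) := by
  refine csSup_le (hΛ.image _) ?_
  rintro _ ⟨l, hl, rfl⟩
  calc L ((Fintype.card ι : ℝ)⁻¹ • ∑ i, d i) l
      ≤ (Fintype.card ι : ℝ)⁻¹ * ∑ i, L (d i) l := (hconv l hl).map_inv_card_smul_sum_le hd
    _ ≤ (Fintype.card ι : ℝ)⁻¹ * sSup ((fun l => ∑ i, L (d i) l) '' Λ) := by
        gcongr
        exact le_csSup (bddAbove_image_sum_right hC hd) ⟨l, hl, rfl⟩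

end Jensen

theorem meta_algorithm_guarantee_general
    {n m N : ℕ} (hN : 0 < N)
    (K : Set (Fin n → ℝ)) (Λ : Set (Fin m → ℝ))
    (hKcv : Convex ℝ K) (hKcp : IsCompact K)
    (hΛcv : Convex ℝ Λ) (hΛcp : IsCompact Λ)
    (L : (Fin n → ℝ) → (Fin m → ℝ) → ℝ)
    (hLcont : ContinuousOn (fun p : (Fin n → ℝ) × (Fin m → ℝ) => L p.1 p.2) (K ×ˢ Λ))
    (hLconv : ∀ l ∈ Λ, ConvexOn ℝ K fun x => L x l)
    (hLconc : ∀ x ∈ K, ConcaveOn ℝ Λ (L x))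
    (d : Fin N → (Fin n → ℝ)) (lam : Fin N → (Fin m → ℝ))
    (hd : ∀ k, d k ∈ K) (hlam : ∀ k, lam k ∈ Λ)
    (ε δ : ℝ)
    (hreg_d : (1 / (N : ℝ)) *
        ((∑ k, L (d k) (lam k)) - sInf ((fun x => ∑ k, L x (lam k)) '' K)) ≤ ε)
    (hreg_l : (1 / (N : ℝ)) *
        (sSup ((fun l => ∑ k, L (d k) l) '' Λ) - ∑ k, L (d k) (lam k)) ≤ δ) :
    sInf ((fun x => sSup ((fun l => L x l) '' Λ)) '' K) - ε - δ
        ≤ sInf ((fun x => L x ((N : ℝ)⁻¹ • ∑ k, lam k)) '' K) ∧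
    sSup ((fun l => L ((N : ℝ)⁻¹ • ∑ k, d k) l) '' Λ)
        ≤ sInf ((fun x => sSup ((fun l => L x l) '' Λ)) '' K) + ε + δ := by
  have : Nonempty (Fin N) := ⟨⟨0, hN⟩⟩
  obtain ⟨C, hC⟩ := (hKcp.prod hΛcp).exists_bound_of_continuousOn hLcont
  replace hC : ∀ x ∈ K, ∀ l ∈ Λ, |L x l| ≤ C := fun x hx l hl => hC (x, l) ⟨hx, hl⟩
  have hdbar := hKcv.inv_card_smul_sum_mem hd
  have hlbar := hΛcv.inv_card_smul_sum_mem hlam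
  have hjensen_d := sSup_image_le_inv_card_mul_sSup_image_sum hC ⟨_, hlbar⟩ hLconv hd
  have hjensen_l := inv_card_mul_sInf_image_sum_le hC ⟨_, hdbar⟩ hLconc hlam
  have hlow := sInf_image_le_minimaxValue hC ⟨_, hdbar⟩ hlbar
  have hhigh := minimaxValue_le_sSup_image hC ⟨_, hlbar⟩ hdbar
  simp only [Fintype.card_fin, minimaxValue] at hjensen_d hjensen_l hlow hhigh
  rw [one_div, mul_sub] at hreg_d hreg_l
  exact ⟨by linarith [hhigh], by linarith [hlow]⟩

/-- Theorem 2 of Abernethy–Wang, meta-algorithm guarantee: if the policy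
iterates and cost iterates have average regret at most `ε` and `δ` respectively, then the
averaged dual iterate certifies a lower bound `v - ε - δ` and the averaged primal iterate
certifies an upper bound `v + ε + δ` on the minimax value `v`. -/
theorem meta_algorithm_guarantee
    {n m N : ℕ} (hN : 0 < N)
    (K : Set (Fin n → ℝ)) (Λ : Set (Fin m → ℝ))
    (hKne : K.Nonempty) (hKcv : Convex ℝ K) (hKcp : IsCompact K)
    (hΛne : Λ.Nonempty) (hΛcv : Convex ℝ Λ) (hΛcp : IsCompact Λ)
    (L : (Fin n → ℝ) → (Fin m → ℝ) → ℝ)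
    (hLcont : ContinuousOn (fun p : (Fin n → ℝ) × (Fin m → ℝ) => L p.1 p.2) (K ×ˢ Λ))
    (hLconv : ∀ l ∈ Λ, ConvexOn ℝ K fun x => L x l)
    (hLconc : ∀ x ∈ K, ConcaveOn ℝ Λ (L x))
    (d : Fin N → (Fin n → ℝ)) (lam : Fin N → (Fin m → ℝ))
    (hd : ∀ k, d k ∈ K) (hlam : ∀ k, lam k ∈ Λ)
    (ε δ : ℝ)
    (hreg_d : (1 / (N : ℝ)) *
        ((∑ k, L (d k) (lam k)) - sInf ((fun x => ∑ k, L x (lam k)) '' K)) ≤ ε)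
    (hreg_l : (1 / (N : ℝ)) *
        (sSup ((fun l => ∑ k, L (d k) l) '' Λ) - ∑ k, L (d k) (lam k)) ≤ δ) :
    sInf ((fun x => sSup ((fun l => L x l) '' Λ)) '' K) - ε - δ
        ≤ sInf ((fun x => L x ((N : ℝ)⁻¹ • ∑ k, lam k)) '' K) ∧
    sSup ((fun l => L ((N : ℝ)⁻¹ • ∑ k, d k) l) '' Λ)
        ≤ sInf ((fun x => sSup ((fun l => L x l) '' Λ)) '' K) + ε + δ :=
  meta_algorithm_guarantee_general hN K Λ hKcv hKcp hΛcv hΛcp L hLcont hLconv hLconc d lam hd hlam ε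
    δ hreg_d hreg_l
end

section
/- Let K ⊆ ℝ^n and Λ ⊆ ℝ^n be nonempty convex compact sets, let g : Λ → ℝ be continuous and convex, define L(d, λ) = ⟨λ, d⟩ − g(λ), and let f : ℝ^n → ℝ be a function satisfying f(d) = max_{λ ∈ Λ} L(d, λ) for every d ∈ K. If sequences d_1,…,d_K ∈ K and λ_1,…,λ_K ∈ Λ satisfy the average-regret bounds (1/K)(Σ_{k=1}^K L(d_k, λ_k) − min_{d ∈ K} Σ_{k=1}^K L(d, λ_k)) ≤ ε and (1/K)(max_{λ ∈ Λ} Σ_{k=1}^K L(d_k, λ) − Σ_{k=1}^K L(d_k, λ_k)) ≤ δ, then the average iterate d̄ = (1/K) Σ_k d_k satisfies f(d̄) − min_{d ∈ K} f(d) ≤ ε + δ. -/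
open Finset

/-!
Write `d̄` for the average of the `N` iterates. Since `L` is affine in its first argument,
`∑ₖ L(dₖ, λ) = N · L(d̄, λ)`, so `N · f(d̄)` is the maximum over `Λ` of `∑ₖ L(dₖ, ·)`. Since each
`λₖ` lies in `Λ`, `∑ₖ L(d, λₖ) ≤ N · f(d)` for every `d ∈ K`, hence
`min_K ∑ₖ L(·, λₖ) ≤ N · min_K f`. So `f(d̄) - min_K f` is at most the averaged duality gap
`(max_Λ ∑ₖ L(dₖ, ·) - min_K ∑ₖ L(·, λₖ)) / N`, which is the sum of the two average regrets.
-/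

theorem Convex.inv_card_smul_sum_mem_s6 {E ι : Type*} [AddCommGroup E] [Module ℝ E] [Fintype ι]
    [Nonempty ι] {K : Set E} (hK : Convex ℝ K) {d : ι → E} (hd : ∀ k, d k ∈ K) :
    (Fintype.card ι : ℝ)⁻¹ • ∑ k, d k ∈ K := by
  rw [smul_sum]
  refine hK.sum_mem (fun _ _ => by positivity) ?_ fun k _ => hd k
  simp [card_univ]

theorem sum_dotProduct_sub_eq_card_mul {ι m : Type*} [Fintype ι] [Nonempty ι] [Fintype m]
    (l : m → ℝ) (c : ℝ) (d : ι → m → ℝ) :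
    ∑ k, (l ⬝ᵥ d k - c) = Fintype.card ι * (l ⬝ᵥ ((Fintype.card ι : ℝ)⁻¹ • ∑ k, d k) - c) := by
  rw [dotProduct_smul, dotProduct_sum, sum_sub_distrib, sum_const, card_univ, nsmul_eq_mul,
    smul_eq_mul]
  field_simp

section

variable {E F ι : Type*} [Fintype ι] {K : Set E} {Λ : Set F} {L : E → F → ℝ}

theorem sSup_image_sum_eq_card_mul_of_average {d : ι → E} {x : E}
    (havg : ∀ l, ∑ k, L (d k) l = Fintype.card ι * L x l) :
    sSup ((fun l => ∑ k, L (d k) l) '' Λ) = Fintype.card ι * sSup (L x '' Λ) := by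
  simp_rw [havg, ← smul_eq_mul, ← Real.sSup_smul_of_nonneg (Nat.cast_nonneg _), ← Set.image_smul,
    Set.image_image]

theorem csInf_image_sum_le_card_mul {f : E → ℝ} (hK : K.Nonempty)
    (hf : ∀ x ∈ K, f x = sSup (L x '' Λ)) (hbdd : ∀ x ∈ K, BddAbove (L x '' Λ))
    {lam : ι → F} (hlam : ∀ k, lam k ∈ Λ) (hψ : BddBelow ((fun x => ∑ k, L x (lam k)) '' K)) :
    sInf ((fun x => ∑ k, L x (lam k)) '' K) ≤ Fintype.card ι * sInf (f '' K) := by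
  rw [← smul_eq_mul, ← Real.sInf_smul_of_nonneg (Nat.cast_nonneg _), ← Set.image_smul,
    Set.image_image]
  refine le_csInf (hK.image _) ?_
  rintro _ ⟨x, hx, rfl⟩
  calc sInf ((fun x => ∑ k, L x (lam k)) '' K) ≤ ∑ k, L x (lam k) := csInf_le hψ ⟨x, hx, rfl⟩
    _ ≤ Fintype.card ι • f x := by
      rw [← card_univ]
      refine sum_le_card_nsmul _ _ _ fun k _ => ?_
      rw [hf x hx]
      exact le_csSup (hbdd x hx) ⟨lam k, hlam k, rfl⟩
    _ = _ := by simp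

end

theorem averaged_iterate_suboptimality_general
    {n N : ℕ} (hN : 0 < N)
    (K Λ : Set (Fin n → ℝ))
    (hKne : K.Nonempty) (hKcv : Convex ℝ K) (hKcp : IsCompact K)
    (hΛcp : IsCompact Λ)
    (g : (Fin n → ℝ) → ℝ) (hgcont : ContinuousOn g Λ)
    (L : (Fin n → ℝ) → (Fin n → ℝ) → ℝ)
    (hL : L = fun x l => (∑ i, l i * x i) - g l)
    (f : (Fin n → ℝ) → ℝ)
    (hf : ∀ x ∈ K, f x = sSup ((fun l => L x l) '' Λ))
    (d lam : Fin N → (Fin n → ℝ))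
    (hd : ∀ k, d k ∈ K) (hlam : ∀ k, lam k ∈ Λ)
    (ε δ : ℝ)
    (hreg_d : (1 / (N : ℝ)) *
        ((∑ k, L (d k) (lam k)) - sInf ((fun x => ∑ k, L x (lam k)) '' K)) ≤ ε)
    (hreg_l : (1 / (N : ℝ)) *
        (sSup ((fun l => ∑ k, L (d k) l) '' Λ) - ∑ k, L (d k) (lam k)) ≤ δ) :
    f ((N : ℝ)⁻¹ • ∑ k, d k) - sInf (f '' K) ≤ ε + δ := by
  replace hL : ∀ x l, L x l = l ⬝ᵥ x - g l := by simp [hL, dotProduct]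
  have : Nonempty (Fin N) := ⟨⟨0, hN⟩⟩
  have hsup := sSup_image_sum_eq_card_mul_of_average (Λ := Λ) (L := L) (d := d)
    fun l => by simpa only [hL] using sum_dotProduct_sub_eq_card_mul l (g l) d
  have hinf := csInf_image_sum_le_card_mul hKne hf
    (fun x _ => (hΛcp.image_of_continuousOn (by simp only [hL]; fun_prop)).bddAbove) hlam
    (hKcp.image_of_continuousOn (by simp only [hL]; fun_prop)).bddBelow
  simp only [Fintype.card_fin] at hsup hinf
  have hN : (0 : ℝ) < N := by exact_mod_cast hN
  rw [hf _ (by simpa using hKcv.inv_card_smul_sum_mem_s6 hd)]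
  rw [hsup, one_div, mul_sub, inv_mul_cancel_left₀ hN.ne'] at hreg_l
  rw [one_div, mul_sub] at hreg_d
  have hinf_avg := (inv_mul_le_iff₀ hN).2 hinf
  linarith

/-- For the Fenchel-game Lagrangian `L(d,λ) = ⟨λ,d⟩ - g(λ)` with
`f(d) = max_{λ∈Λ} L(d,λ)` on `K`, average regret bounds `ε` (policy player) and
`δ` (cost player) imply that the averaged iterate is `(ε+δ)`-optimal for `f` on `K`. -/
theorem averaged_iterate_suboptimality
    {n N : ℕ} (hN : 0 < N)
    (K Λ : Set (Fin n → ℝ))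
    (hKne : K.Nonempty) (hKcv : Convex ℝ K) (hKcp : IsCompact K)
    (hΛne : Λ.Nonempty) (hΛcv : Convex ℝ Λ) (hΛcp : IsCompact Λ)
    (g : (Fin n → ℝ) → ℝ) (hgcont : ContinuousOn g Λ) (hgconv : ConvexOn ℝ Λ g)
    (L : (Fin n → ℝ) → (Fin n → ℝ) → ℝ)
    (hL : L = fun x l => (∑ i, l i * x i) - g l)
    (f : (Fin n → ℝ) → ℝ)
    (hf : ∀ x ∈ K, f x = sSup ((fun l => L x l) '' Λ))
    (d lam : Fin N → (Fin n → ℝ))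
    (hd : ∀ k, d k ∈ K) (hlam : ∀ k, lam k ∈ Λ)
    (ε δ : ℝ)
    (hreg_d : (1 / (N : ℝ)) *
        ((∑ k, L (d k) (lam k)) - sInf ((fun x => ∑ k, L x (lam k)) '' K)) ≤ ε)
    (hreg_l : (1 / (N : ℝ)) *
        (sSup ((fun l => ∑ k, L (d k) l) '' Λ) - ∑ k, L (d k) (lam k)) ≤ δ) :
    f ((N : ℝ)⁻¹ • ∑ k, d k) - sInf (f '' K) ≤ ε + δ :=
  averaged_iterate_suboptimality_general hN K Λ hKne hKcv hKcp hΛcp g hgcont L hL f hf d lam hd hlam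
    ε δ hreg_d hreg_l
end

section
/- Let K ⊆ ℝ^n and Λ ⊆ ℝ^n be nonempty convex compact sets, let f : ℝ^n → ℝ, suppose f*(λ) := sup_{x ∈ ℝ^n}(⟨λ, x⟩ − f(x)) is finite for every λ ∈ Λ and that f(d) = max_{λ ∈ Λ}(⟨λ, d⟩ − f*(λ)) for every d ∈ K, and that λ ↦ f*(λ) is continuous and convex on Λ. Then min_{d ∈ K} f(d) = min_{d ∈ K} max_{λ ∈ Λ} (⟨λ, d⟩ − f*(λ)) = max_{λ ∈ Λ} min_{d ∈ K} (⟨λ, d⟩ − f*(λ)); in particular the minimax equality (exchange of min and max) holds for the Lagrangian L(d, λ) = ⟨λ, d⟩ − f*(λ). -/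
/-!
The Lagrangian `L(d, λ) = ⟨λ, d⟩ - f*(λ)` is continuous and affine in `d`, and continuous and
concave in `λ` because `f*` is convex on `Λ`. On the compact convex sets `K` and `Λ`, Sion's
minimax theorem therefore exchanges `min_K` and `max_Λ`, and on `K` the function `f` is
`max_Λ L(·, λ)`. Compactness makes every sup and inf attained, which is what lets the real
`sSup`/`sInf` (junk-valued on unbounded sets) stand for the lattice bounds in Sion's theorem.
-/

open Set

section Semicontinuous

variable {α : Type*} [TopologicalSpace α] {s : Set α} {g : α → ℝ}

theorem UpperSemicontinuousOn.isLUB_sSup_image (hne : s.Nonempty) (hs : IsCompact s)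
    (hg : UpperSemicontinuousOn g s) : IsLUB (g '' s) (sSup (g '' s)) :=
  let ⟨_, ha, hmax⟩ := hg.exists_isMaxOn hne hs
  isLUB_csSup (hne.image g) (hmax.isLUB ha).bddAbove

theorem LowerSemicontinuousOn.isGLB_sInf_image (hne : s.Nonempty) (hs : IsCompact s)
    (hg : LowerSemicontinuousOn g s) : IsGLB (g '' s) (sInf (g '' s)) :=
  let ⟨_, ha, hmin⟩ := hg.exists_isMinOn hne hs
  isGLB_csInf (hne.image g) (hmin.isGLB ha).bddBelow

end Semicontinuous

section Minimax

variable {E F : Type*}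
  [TopologicalSpace E] [AddCommGroup E] [Module ℝ E] [IsTopologicalAddGroup E] [ContinuousSMul ℝ E]
  [TopologicalSpace F] [AddCommGroup F] [Module ℝ F] [IsTopologicalAddGroup F] [ContinuousSMul ℝ F]
  {X : Set E} {Y : Set F} {f : E → F → ℝ}

theorem sInf_sSup_image_eq_sSup_sInf_image
    (neX : X.Nonempty) (kX : IsCompact X) (cX : Convex ℝ X)
    (neY : Y.Nonempty) (kY : IsCompact Y) (cY : Convex ℝ Y)
    (hfy : ∀ y ∈ Y, LowerSemicontinuousOn (fun x => f x y) X)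
    (hfy' : ∀ y ∈ Y, QuasiconvexOn ℝ X fun x => f x y)
    (hfx : ∀ x ∈ X, UpperSemicontinuousOn (f x) Y)
    (hfx' : ∀ x ∈ X, QuasiconcaveOn ℝ Y (f x)) :
    sInf ((fun x => sSup (f x '' Y)) '' X) = sSup ((fun y => sInf ((f · y) '' X)) '' Y) := by
  have hsup x (hx : x ∈ X) := (hfx x hx).isLUB_sSup_image neY kY
  have hinf y (hy : y ∈ Y) := (hfy y hy).isGLB_sInf_image neX kX
  have hinf_le_sup {x y} (hx : x ∈ X) (hy : y ∈ Y) : sInf ((f · y) '' X) ≤ sSup (f x '' Y) :=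
    ((hinf y hy).1 ⟨x, hx, rfl⟩).trans ((hsup x hx).1 ⟨y, hy, rfl⟩)
  have ⟨x₀, hx₀⟩ := neX
  have ⟨y₀, hy₀⟩ := neY
  refine Sion.minimax neX kX hfy hfy' cY hfx hfx' cX _ hsup _ ?_ _ hinf _ ?_
  · refine isGLB_csInf (neX.image _) ⟨sInf ((f · y₀) '' X), ?_⟩
    rintro _ ⟨x, hx, rfl⟩
    exact hinf_le_sup hx hy₀
  · refine isLUB_csSup (neY.image _) ⟨sSup (f x₀ '' Y), ?_⟩
    rintro _ ⟨y, hy, rfl⟩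
    exact hinf_le_sup hx₀ hy

end Minimax

theorem fenchel_minimax_general
    {n : ℕ}
    (K Λ : Set (Fin n → ℝ))
    (hKne : K.Nonempty) (hKcv : Convex ℝ K) (hKcp : IsCompact K)
    (hΛne : Λ.Nonempty) (hΛcv : Convex ℝ Λ) (hΛcp : IsCompact Λ)
    (f : (Fin n → ℝ) → ℝ)
    (fstar : (Fin n → ℝ) → ℝ)
    (hfstarcont : ContinuousOn fstar Λ)
    (hfstarconv : ConvexOn ℝ Λ fstar)
    (hf : ∀ x ∈ K, f x = sSup ((fun l => (∑ i, l i * x i) - fstar l) '' Λ)) :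
    sInf (f '' K)
      = sInf ((fun x => sSup ((fun l => (∑ i, l i * x i) - fstar l) '' Λ)) '' K) ∧
    sInf (f '' K)
      = sSup ((fun l => sInf ((fun x => (∑ i, l i * x i) - fstar l) '' K)) '' Λ) := by
  have hfK : f '' K = (fun x => sSup ((fun l => l ⬝ᵥ x - fstar l) '' Λ)) '' K :=
    image_congr hf
  have hcont_d (l : Fin n → ℝ) : Continuous fun x => l ⬝ᵥ x - fstar l :=
    (continuous_const.dotProduct continuous_id).sub continuous_const
  have hconvex_d (l : Fin n → ℝ) : ConvexOn ℝ K fun x => l ⬝ᵥ x - fstar l :=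
    ((dotProductBilin ℝ ℝ l).convexOn hKcv).sub (concaveOn_const _ hKcv)
  have hcont_l (x : Fin n → ℝ) : ContinuousOn (fun l => l ⬝ᵥ x - fstar l) Λ :=
    (continuous_id.dotProduct continuous_const).continuousOn.sub hfstarcont
  have hconcave_l (x : Fin n → ℝ) : ConcaveOn ℝ Λ fun l => l ⬝ᵥ x - fstar l :=
    (((dotProductBilin ℝ ℝ).flip x).concaveOn hΛcv).sub hfstarconv
  have hminimax := sInf_sSup_image_eq_sSup_sInf_image (f := fun x l => l ⬝ᵥ x - fstar l)
    hKne hKcp hKcv hΛne hΛcp hΛcv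
    (fun l _ => (hcont_d l).continuousOn.lowerSemicontinuousOn)
    (fun l _ => (hconvex_d l).quasiconvexOn)
    (fun x _ => (hcont_l x).upperSemicontinuousOn)
    (fun x _ => (hconcave_l x).quasiconcaveOn)
  exact ⟨congrArg sInf hfK, hfK ▸ hminimax⟩

/-- Minimax equality for the Fenchel-dual Lagrangian. If `f*` (the Fenchel
conjugate of `f`, encoded via `IsLUB`) is finite, continuous and convex on the nonempty
convex compact set `Λ`, and `f(d) = max_{λ∈Λ}(⟨λ,d⟩ - f*(λ))` on the nonempty convex
compact set `K`, then
`min_K f = min_K max_Λ (⟨λ,d⟩ - f*(λ)) = max_Λ min_K (⟨λ,d⟩ - f*(λ))`. -/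
theorem fenchel_minimax
    {n : ℕ}
    (K Λ : Set (Fin n → ℝ))
    (hKne : K.Nonempty) (hKcv : Convex ℝ K) (hKcp : IsCompact K)
    (hΛne : Λ.Nonempty) (hΛcv : Convex ℝ Λ) (hΛcp : IsCompact Λ)
    (f : (Fin n → ℝ) → ℝ)
    (fstar : (Fin n → ℝ) → ℝ)
    (hfstar : ∀ l ∈ Λ,
      IsLUB {y : ℝ | ∃ x : Fin n → ℝ, y = (∑ i, l i * x i) - f x} (fstar l))
    (hfstarcont : ContinuousOn fstar Λ)
    (hfstarconv : ConvexOn ℝ Λ fstar)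
    (hf : ∀ x ∈ K, f x = sSup ((fun l => (∑ i, l i * x i) - fstar l) '' Λ)) :
    sInf (f '' K)
      = sInf ((fun x => sSup ((fun l => (∑ i, l i * x i) - fstar l) '' Λ)) '' K) ∧
    sInf (f '' K)
      = sSup ((fun l => sInf ((fun x => (∑ i, l i * x i) - fstar l) '' K)) '' Λ) :=
  fenchel_minimax_general K Λ hKne hKcv hKcp hΛne hΛcv hΛcp f fstar hfstarcont hfstarconv hf
end
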